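/- For b = 0 and ν < 0, the mass of the regular part of the Feller fundamental solution is deficient: ∫₀^∞ (1/(2t))·(y/ξ)^{ν/2}·e^{−(y+ξ)/(2t)}·I_{|ν|}(√(yξ)/t) dy = γ(−ν, ξ/(2t))/Γ(−ν) < 1 for all t > 0, ξ > 0, where γ is the lower incomplete gamma function and I_{|ν|} is the modified Bessel function of the first kind. -/

import Mathlib

/-!
Expanding `I_{-ν}` in its power series and integrating term by term, the `r`-th term is a Gamma
integral in `y` and contributes `e^{-z} z^{r-ν} / Γ(r+1-ν)`, where `z = ξ / (2t)`. Iterating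
`γ(s+1, z) = s γ(s, z) - z^s e^{-z}` shows that these terms add up to `γ(-ν, z) / Γ(-ν)`; all of
them are nonnegative, which justifies the interchange of sum and integral. The deficit
`Γ(-ν) - γ(-ν, z)` is the integral of `η^{-ν-1} e^{-η}` over `(z, ∞)`, hence positive.
-/

open Real Set MeasureTheory

/-- Modified Bessel function of the first kind of (real) order `μ`. -/
noncomputable def besselI (μ x : ℝ) : ℝ :=
  ∑' r : ℕ, (x / 2) ^ (2 * (r : ℝ) + μ) / ((r.factorial : ℝ) * Real.Gamma ((r : ℝ) + 1 + μ))

/-- The lower incomplete gamma function `γ(m, z) = ∫₀^z η^(m-1) e^(-η) dη`. -/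
noncomputable def lowerGamma (m z : ℝ) : ℝ :=
  ∫ η in (0:ℝ)..z, η ^ (m - 1) * Real.exp (-η)

open Filter Topology

section LowerGamma

variable {s z : ℝ}

lemma intervalIntegrable_rpow_sub_one_mul_exp_neg (hs : 0 < s) (a b : ℝ) :
    IntervalIntegrable (fun η : ℝ => η ^ (s - 1) * exp (-η)) volume a b :=
  (intervalIntegral.intervalIntegrable_rpow' (by linarith)).mul_continuousOn
    (continuous_exp.comp continuous_neg).continuousOn

lemma lowerGamma_nonneg (hz : 0 ≤ z) : 0 ≤ lowerGamma s z :=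
  intervalIntegral.integral_nonneg hz fun x hx => by have := hx.1; positivity

lemma lowerGamma_le_rpow_div (hs : 0 < s) (hz : 0 ≤ z) : lowerGamma s z ≤ z ^ s / s := by
  calc lowerGamma s z ≤ ∫ η in (0:ℝ)..z, η ^ (s - 1) := by
        refine intervalIntegral.integral_mono_on hz
          (intervalIntegrable_rpow_sub_one_mul_exp_neg hs 0 z)
          (intervalIntegral.intervalIntegrable_rpow' (by linarith)) fun x hx => ?_
        exact mul_le_of_le_one_right (rpow_nonneg hx.1 _) (exp_le_one_iff.2 (by linarith [hx.1]))
    _ = z ^ s / s := by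
        rw [integral_rpow (Or.inl (by linarith)), sub_add_cancel, zero_rpow hs.ne', sub_zero]

lemma lowerGamma_add_one (hs : 0 < s) (hz : 0 ≤ z) :
    lowerGamma (s + 1) z = s * lowerGamma s z - z ^ s * exp (-z) := by
  have hint := intervalIntegrable_rpow_sub_one_mul_exp_neg hs 0 z
  have hint_succ : IntervalIntegrable (fun η : ℝ => η ^ s * exp (-η)) volume 0 z := by
    simpa using intervalIntegrable_rpow_sub_one_mul_exp_neg (by linarith : 0 < s + 1) 0 z
  have hcont : Continuous fun η : ℝ => η ^ s * exp (-η) :=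
    (continuous_rpow_const hs.le).mul (continuous_exp.comp continuous_neg)
  have hFTC : ∫ η in (0:ℝ)..z, (s * (η ^ (s - 1) * exp (-η)) - η ^ s * exp (-η))
      = z ^ s * exp (-z) - 0 ^ s * exp (-0) := by
    refine intervalIntegral.integral_eq_sub_of_hasDeriv_right_of_le hz hcont.continuousOn
      (fun x hx => ?_) (hint.const_mul s |>.sub hint_succ)
    have hexp : HasDerivAt (fun y : ℝ => exp (-y)) (-exp (-x)) x := by
      simpa using (hasDerivAt_neg x).exp
    have hd : HasDerivAt (fun η : ℝ => η ^ s * exp (-η))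
        (s * x ^ (s - 1) * exp (-x) + x ^ s * -exp (-x)) x :=
      (hasDerivAt_rpow_const (p := s) (Or.inl hx.1.ne')).mul hexp
    convert hd.hasDerivWithinAt using 1
    ring
  rw [intervalIntegral.integral_sub (hint.const_mul s) hint_succ,
    intervalIntegral.integral_const_mul, zero_rpow hs.ne'] at hFTC
  simp only [lowerGamma, add_sub_cancel_right]
  linarith

lemma lowerGamma_div_Gamma_eq_add (hs : 0 < s) (hz : 0 ≤ z) :
    lowerGamma s z / Gamma s
      = exp (-z) * z ^ s / Gamma (s + 1) + lowerGamma (s + 1) z / Gamma (s + 1) := by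
  have := Gamma_pos_of_pos hs
  rw [lowerGamma_add_one hs hz, Gamma_add_one hs.ne']
  field_simp
  ring

lemma lowerGamma_div_Gamma_eq_sum_range_add (hs : 0 < s) (hz : 0 ≤ z) (N : ℕ) :
    lowerGamma s z / Gamma s
      = ∑ n ∈ Finset.range N, exp (-z) * z ^ (s + n) / Gamma (s + n + 1)
        + lowerGamma (s + N) z / Gamma (s + N) := by
  induction N with
  | zero => simp
  | succ N ih =>
    rw [ih, lowerGamma_div_Gamma_eq_add (by positivity) hz, Finset.sum_range_succ]
    push_cast
    ring_nf

lemma lowerGamma_div_Gamma_le (hs : 0 < s) (hz : 0 ≤ z) :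
    lowerGamma s z / Gamma s ≤ z ^ s / Gamma (s + 1) := by
  rw [Gamma_add_one hs.ne', ← div_div]
  exact div_le_div_of_nonneg_right (lowerGamma_le_rpow_div hs hz) (Gamma_pos_of_pos hs).le

theorem hasSum_lowerGamma_div_Gamma (hs : 0 < s) (hz : 0 ≤ z) :
    HasSum (fun n : ℕ => exp (-z) * z ^ (s + n) / Gamma (s + n + 1))
      (lowerGamma s z / Gamma s) := by
  have hterm_nonneg : ∀ n : ℕ, 0 ≤ exp (-z) * z ^ (s + n) / Gamma (s + n + 1) := fun n => by
    have := Gamma_pos_of_pos (by positivity : 0 < s + n + 1)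
    positivity
  have hrem_nonneg : ∀ N : ℕ, 0 ≤ lowerGamma (s + N) z / Gamma (s + N) := fun N =>
    div_nonneg (lowerGamma_nonneg hz) (Gamma_nonneg_of_nonneg (by positivity))
  have hsum : Summable fun n : ℕ => exp (-z) * z ^ (s + n) / Gamma (s + n + 1) :=
    summable_of_sum_range_le (c := lowerGamma s z / Gamma s) hterm_nonneg fun N => by
      linarith [lowerGamma_div_Gamma_eq_sum_range_add hs hz N, hrem_nonneg N]
  -- the remainder is at most `e^z` times the `N`-th term
  have hrem : Tendsto (fun N : ℕ => lowerGamma (s + N) z / Gamma (s + N)) atTop (𝓝 0) := by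
    refine squeeze_zero hrem_nonneg (fun N => lowerGamma_div_Gamma_le (by positivity) hz) ?_
    simpa [mul_div_assoc, ← mul_assoc, ← exp_add] using hsum.tendsto_atTop_zero.const_mul (exp z)
  rw [hasSum_iff_tendsto_nat_of_nonneg hterm_nonneg]
  have hlim := (tendsto_const_nhds (x := lowerGamma s z / Gamma s)).sub hrem
  rw [sub_zero] at hlim
  exact hlim.congr fun N => by linarith [lowerGamma_div_Gamma_eq_sum_range_add hs hz N]

theorem lowerGamma_lt_Gamma (hs : 0 < s) (hz : 0 ≤ z) : lowerGamma s z < Gamma s := by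
  have hint : IntegrableOn (fun x : ℝ => exp (-x) * x ^ (s - 1)) (Ioi 0) :=
    GammaIntegral_convergent hs
  have htail : 0 < ∫ x in Ioi z, exp (-x) * x ^ (s - 1) := by
    rw [setIntegral_pos_iff_support_of_nonneg_ae _ (hint.mono_set (Ioi_subset_Ioi hz))]
    · have hsupp : Ioi z ⊆ Function.support fun x : ℝ => exp (-x) * x ^ (s - 1) := fun x hx =>
        (mul_pos (exp_pos _) (rpow_pos_of_pos (hz.trans_lt hx) _)).ne'
      rw [inter_eq_right.mpr hsupp, volume_Ioi]
      exact ENNReal.zero_lt_top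
    · filter_upwards [ae_restrict_mem measurableSet_Ioi] with x hx
      have := hz.trans_lt hx
      positivity
  have hsplit : Gamma s = lowerGamma s z + ∫ x in Ioi z, exp (-x) * x ^ (s - 1) := by
    rw [Gamma_eq_integral hs, ← Ioc_union_Ioi_eq_Ioi hz,
      setIntegral_union (Ioc_disjoint_Ioi le_rfl) measurableSet_Ioi
        (hint.mono_set Ioc_subset_Ioi_self) (hint.mono_set (Ioi_subset_Ioi hz)),
      lowerGamma, intervalIntegral.integral_of_le hz]
    simp only [mul_comm]
  linarith

end LowerGamma

noncomputable def fellerSeriesTerm (ν t ξ : ℝ) (r : ℕ) (y : ℝ) : ℝ :=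
  1 / (2 * t) * (y / ξ) ^ (ν / 2) * exp (-(y + ξ) / (2 * t))
    * ((√(y * ξ) / t / 2) ^ (2 * (r : ℝ) + -ν) / (r.factorial * Gamma (r + 1 + -ν)))

section Feller

variable {ν t ξ y : ℝ} (r : ℕ)

lemma fellerSeriesTerm_eq (ht : 0 < t) (hξ : 0 < ξ) (hy : 0 < y) :
    fellerSeriesTerm ν t ξ r y
      = exp (-(ξ / (2 * t))) * (ξ / (2 * t)) ^ (-ν + r) * (1 / (2 * t)) ^ ((r : ℝ) + 1)
          / (r.factorial * Gamma (r + 1 + -ν))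
        * (y ^ ((r + 1 : ℝ) - 1) * exp (-(1 / (2 * t) * y))) := by
  have h2t : 0 < 2 * t := by positivity
  have hsqrt : 0 < √(y * ξ) := by positivity
  unfold fellerSeriesTerm
  -- turn every factor into an exponential, so that both sides become `exp _ / _`
  nth_rewrite 1 [show 1 / (2 * t) = exp (-log (2 * t)) by rw [exp_neg, exp_log h2t, one_div]]
  rw [show √(y * ξ) / t / 2 = √(y * ξ) / (2 * t) by ring, add_sub_cancel_right,
    rpow_def_of_pos (div_pos hy hξ), rpow_def_of_pos (div_pos hsqrt h2t),
    rpow_def_of_pos (div_pos hξ h2t), rpow_def_of_pos (one_div_pos.2 h2t), rpow_def_of_pos hy,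
    log_div hy.ne' hξ.ne', log_div hsqrt.ne' h2t.ne', log_sqrt (by positivity),
    log_mul hy.ne' hξ.ne', log_div hξ.ne' h2t.ne', log_div one_ne_zero h2t.ne', log_one]
  simp only [← exp_add, mul_div_assoc', div_mul_eq_mul_div]
  congr 2
  ring

lemma fellerSeriesTerm_nonneg (hν : ν < 1) (ht : 0 ≤ t) (hξ : 0 ≤ ξ) (hy : 0 ≤ y) :
    0 ≤ fellerSeriesTerm ν t ξ r y := by
  have := Gamma_pos_of_pos (by linarith [(r.cast_nonneg : (0 : ℝ) ≤ r)] : (0 : ℝ) < r + 1 + -ν)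
  unfold fellerSeriesTerm
  positivity

lemma integral_fellerSeriesTerm (ht : 0 < t) (hξ : 0 < ξ) :
    ∫ y in Ioi 0, fellerSeriesTerm ν t ξ r y
      = exp (-(ξ / (2 * t))) * (ξ / (2 * t)) ^ (-ν + r) / Gamma (-ν + r + 1) := by
  have h2t : 0 < 2 * t := by positivity
  rw [setIntegral_congr_fun measurableSet_Ioi fun y hy => fellerSeriesTerm_eq r ht hξ hy,
    integral_const_mul, integral_rpow_mul_exp_neg_mul_Ioi (by positivity) (by positivity),
    Gamma_nat_eq_factorial, show (r : ℝ) + 1 + -ν = -ν + r + 1 by ring, one_div_one_div,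
    one_div, inv_rpow h2t.le]
  have := rpow_pos_of_pos h2t ((r : ℝ) + 1)
  field_simp

lemma integrableOn_fellerSeriesTerm (ht : 0 < t) (hξ : 0 < ξ) :
    IntegrableOn (fellerSeriesTerm ν t ξ r) (Ioi 0) := by
  have hbase : IntegrableOn (fun y : ℝ => y ^ ((r + 1 : ℝ) - 1) * exp (-(1 / (2 * t) * y)))
      (Ioi 0) :=
    Integrable.of_integral_ne_zero <| by
      rw [integral_rpow_mul_exp_neg_mul_Ioi (by positivity) (by positivity)]
      positivity
  exact IntegrableOn.congr_fun (hbase.const_mul _)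
    (fun y hy => (fellerSeriesTerm_eq r ht hξ hy).symm) measurableSet_Ioi

theorem integral_mul_besselI_eq_lowerGamma_div_Gamma (hν : ν < 0) (ht : 0 < t) (hξ : 0 < ξ) :
    ∫ y in Ioi 0, 1 / (2 * t) * (y / ξ) ^ (ν / 2) * exp (-(y + ξ) / (2 * t))
        * besselI (-ν) (√(y * ξ) / t)
      = lowerGamma (-ν) (ξ / (2 * t)) / Gamma (-ν) := by
  have hnorm : ∀ r : ℕ, ∫ y in Ioi 0, ‖fellerSeriesTerm ν t ξ r y‖
      = exp (-(ξ / (2 * t))) * (ξ / (2 * t)) ^ (-ν + r) / Gamma (-ν + r + 1) := fun r => by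
    rw [← integral_fellerSeriesTerm r ht hξ]
    exact setIntegral_congr_fun measurableSet_Ioi fun y hy =>
      norm_of_nonneg (fellerSeriesTerm_nonneg r (by linarith) ht.le hξ.le (le_of_lt hy))
  have hsum := hasSum_lowerGamma_div_Gamma (neg_pos.2 hν) (by positivity : 0 ≤ ξ / (2 * t))
  have hterms := hasSum_integral_of_summable_integral_norm
    (fun r => integrableOn_fellerSeriesTerm (ν := ν) r ht hξ)
    (by simpa only [hnorm] using hsum.summable)
  simp only [integral_fellerSeriesTerm _ ht hξ] at hterms
  simp only [besselI, ← tsum_mul_left]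
  exact hterms.unique hsum

end Feller

theorem feller_fundamental_solution_mass_deficit
    (ν : ℝ) (hν : ν < 0) (t ξ : ℝ) (ht : 0 < t) (hξ : 0 < ξ) :
    (∫ y in Set.Ioi (0:ℝ),
        (1 / (2 * t)) * (y / ξ) ^ (ν / 2) * Real.exp (-(y + ξ) / (2 * t))
          * besselI |ν| (Real.sqrt (y * ξ) / t))
      = lowerGamma (-ν) (ξ / (2 * t)) / Real.Gamma (-ν) ∧
    lowerGamma (-ν) (ξ / (2 * t)) / Real.Gamma (-ν) < 1 := by
  have hs : 0 < -ν := neg_pos.2 hν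
  rw [abs_of_neg hν]
  exact ⟨integral_mul_besselI_eq_lowerGamma_div_Gamma hν ht hξ,
    (div_lt_one (Gamma_pos_of_pos hs)).2 (lowerGamma_lt_Gamma hs (by positivity))⟩
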